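/- (Corollary 1: strictly positive lower bound on the filter gain.) Let φ, g_{p,1},...,g_{p,n_{g_p}}, g_1,...,g_{n_g} be C² on an open set containing the compact box I ⊂ ℝ^{n_u}, each with strict univariate Lipschitz constants (κ_{p,ji} for g_{p,j}, κ_{ji} for g_j) and strict second-derivative Lipschitz constants (M_{φ,i₁i₂}, M_{g_{p,j},i₁i₂}, M_{g_j,i₁i₂}), with corresponding worst-case linear growth bounds L̄_{p,j}, L̄_j and worst-case quadratic growth bounds Q̄_φ, Q̄_{p,j}, Q̄_j; let γ_j ∈ [0,1) satisfy |∂g_{p,j}/∂u_i| ≤ γ_j κ_{p,ji} on I, and fix projection parameters ε_{p,j}, ε_j, δ_{g_p,j}, δ_{g,j}, δ_φ > 0. Consider iterates u_{k+1} = u_k + K_k(v_k − u_k) where u_0 ∈ I satisfies g_{p,j}(u_0) < 0 for all j and g_j(u_0) ≤ 0 for all j, where each v_k ∈ I satisfies ∇g_{p,j}(u_k)ᵀ(v_k − u_k) ≤ −δ_{g_p,j} for every j with g_{p,j}(u_k) ≥ −ε_{p,j}, ∇g_j(u_k)ᵀ(v_k − u_k) ≤ −δ_{g,j} for every j with g_j(u_k)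 ≥ −ε_j, and ∇φ(u_k)ᵀ(v_k − u_k) ≤ −δ_φ, and where K_k is chosen as the maximal value in [0,1] satisfying, for all j: g_{p,j}(u_k) + K_k Σ_i κ_{p,ji}|v_{k,i} − u_{k,i}| ≤ 0, g_j(u_k + K_k(v_k − u_k)) ≤ 0, and ∇φ(u_k)ᵀ(v_k − u_k) + (K_k/2)Σ_{i₁}Σ_{i₂} M_{φ,i₁i₂}|(v_{k,i₁} − u_{k,i₁})(v_{k,i₂} − u_{k,i₂})| ≤ 0. Then, with K̲ = min[ 2δ_φ/Q̄_φ, min_j min[ε_j/L̄_j, 2δ_{g,j}/Q̄_j], min_j (min[(1 − γ_j)ε_{p,j}, 2(1 − γ_j)δ_{g_p,j}²/Q̄_{p,j}, −g_{p,j}(u_0)] / L̄_{p,j}) ], one has for every k: K_k ≥ min(1, K̲) > 0. -/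

import Mathlib

/-!
Write `c j = min ((1 - γ j) εp j) (min (2 (1 - γ j) δp j² / Q̄p j) (-gp j (u 0)))`. Since `K k` is
the largest feasible gain, it suffices to check that `min 1 K̲` satisfies the three filter
conditions at every step. The box is nondegenerate because `v 0 - u 0` is a strict descent
direction of `φ`, so all growth bounds, hence `K̲`, are positive; and the iterates stay in the box
by convexity. The cost and numerical conditions then follow from first- and second-order Taylor
bounds along `[u k, v k]`, whose coefficients are dominated by `L̄` and `Q̄`. The experimental
condition follows from the invariant `gp j (u k) ≤ -c j`. It is preserved because the filter makes
`gp j` contract, `gp j (u (k+1)) ≤ (1 - γ j) gp j (u k)`, and near the boundary, where the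
projection is active, either `K k Q̄p j ≤ 2 δp j` and the second-order bound shows that `gp j`
decreases, or `K k` is large and the contraction alone gains at least `c j`.
-/

open Set Finset

section Calculus

variable {E : Type*} [NormedAddCommGroup E] [NormedSpace ℝ E]

theorem le_of_fderiv_apply_le_on_segment {f : E → ℝ} {u d : E} {a C t : ℝ}
    (hf : ∀ s ∈ Icc (0 : ℝ) 1, DifferentiableAt ℝ f (u + s • d))
    (hbound : ∀ s ∈ Ico (0 : ℝ) 1, fderiv ℝ f (u + s • d) d ≤ a + s * C)
    (ht : t ∈ Icc (0 : ℝ) 1) :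
    f (u + t • d) ≤ f u + t * a + t ^ 2 / 2 * C := by
  have hline : ∀ s ∈ Icc (0 : ℝ) 1,
      HasDerivAt (fun s : ℝ => f (u + s • d)) (fderiv ℝ f (u + s • d) d) s := fun s hs =>
    (hf s hs).hasFDerivAt.comp_hasDerivAt s
      (by simpa using ((hasDerivAt_id s).smul_const d).const_add u)
  have hpoly : ∀ s : ℝ, HasDerivAt (fun s : ℝ => f u + s * a + s ^ 2 / 2 * C) (a + s * C) s :=
    fun s => ((((hasDerivAt_id' s).mul_const a).const_add (f u)).add
      (((hasDerivAt_pow 2 s).div_const 2).mul_const C)).congr_deriv (by norm_num)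
  refine image_le_of_deriv_right_le_deriv_boundary (B := fun s => f u + s * a + s ^ 2 / 2 * C)
    (fun s hs => (hline s hs).continuousAt.continuousWithinAt)
    (fun s hs => (hline s (Ico_subset_Icc_self hs)).hasDerivWithinAt) (by simp)
    (by fun_prop) (fun s _ => (hpoly s).hasDerivWithinAt) hbound ht

theorem fderiv_fderiv_apply_const {f : E → ℝ} {x : E}
    (hf : DifferentiableAt ℝ (fderiv ℝ f) x) (w e : E) :
    fderiv ℝ (fun y => fderiv ℝ f y w) x e = fderiv ℝ (fderiv ℝ f) x e w := by
  simp [fderiv_clm_apply hf (differentiableAt_const w)]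

end Calculus

section Coordinates

variable {ι : Type*} [Fintype ι] [DecidableEq ι]

theorem ContinuousLinearMap.apply_eq_sum_mul_apply_single (L : (ι → ℝ) →L[ℝ] ℝ) (d : ι → ℝ) :
    L d = ∑ i, d i * L (Pi.single i 1) := by
  conv_lhs => rw [pi_eq_sum_univ' d]
  simp [map_sum]

theorem ContinuousLinearMap.abs_apply_le_sum_mul_abs {L : (ι → ℝ) →L[ℝ] ℝ} {b : ι → ℝ}
    (hb : ∀ i, |L (Pi.single i 1)| ≤ b i) (d : ι → ℝ) :
    |L d| ≤ ∑ i, b i * |d i| := by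
  rw [L.apply_eq_sum_mul_apply_single]
  refine (abs_sum_le_sum_abs _ _).trans (sum_le_sum fun i _ => ?_)
  rw [abs_mul, mul_comm]
  exact mul_le_mul_of_nonneg_right (hb i) (abs_nonneg _)

variable {S : Set (ι → ℝ)} {f : (ι → ℝ) → ℝ} {u v : ι → ℝ} {t : ℝ}

theorem Convex.le_add_mul_sum_mul_abs_of_abs_partial_le (hS : Convex ℝ S)
    (hf : ∀ x ∈ S, DifferentiableAt ℝ f x) {b : ι → ℝ}
    (hb : ∀ x ∈ S, ∀ i, |fderiv ℝ f x (Pi.single i 1)| ≤ b i)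
    (hu : u ∈ S) (hv : v ∈ S) (ht : t ∈ Icc (0 : ℝ) 1) :
    f (u + t • (v - u)) ≤ f u + t * ∑ i, b i * |v i - u i| := by
  have hseg : ∀ s ∈ Icc (0 : ℝ) 1, u + s • (v - u) ∈ S := fun s hs =>
    hS.add_smul_sub_mem hu hv hs
  simpa using le_of_fderiv_apply_le_on_segment (C := 0) (fun s hs => hf _ (hseg s hs))
    (fun s hs => by
      simpa using (le_abs_self _).trans <|
        (fderiv ℝ f _).abs_apply_le_sum_mul_abs (hb _ (hseg s (Ico_subset_Icc_self hs))) (v - u))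
    ht

theorem Convex.le_taylor_of_abs_second_partial_le (hS : Convex ℝ S)
    (hf : ∀ x ∈ S, ContDiffAt ℝ 2 f x) {M : ι → ι → ℝ}
    (hM : ∀ x ∈ S, ∀ i₁ i₂,
      |fderiv ℝ (fun y => fderiv ℝ f y (Pi.single i₁ 1)) x (Pi.single i₂ 1)| ≤ M i₁ i₂)
    (hu : u ∈ S) (hv : v ∈ S) (ht : t ∈ Icc (0 : ℝ) 1) :
    f (u + t • (v - u)) ≤ f u + t * fderiv ℝ f u (v - u)
      + t ^ 2 / 2 * ∑ i₁, ∑ i₂, M i₁ i₂ * |(v i₁ - u i₁) * (v i₂ - u i₂)| := by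
  have hD : ∀ x ∈ S, DifferentiableAt ℝ (fderiv ℝ f) x := fun x hx =>
    ((hf x hx).fderiv_right le_rfl).differentiableAt one_ne_zero
  have hF := fun {s : ℝ} (hs : s ∈ Icc (0 : ℝ) 1) => hS.le_add_mul_sum_mul_abs_of_abs_partial_le
    (f := fun y => fderiv ℝ f y (v - u)) (b := fun i₂ => ∑ i₁, M i₁ i₂ * |v i₁ - u i₁|)
    (fun x hx => (hD x hx).clm_apply (differentiableAt_const _))
    (fun x hx i₂ => by
      rw [fderiv_fderiv_apply_const (hD x hx)]
      refine ContinuousLinearMap.abs_apply_le_sum_mul_abs (fun i₁ => ?_) (v - u)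
      rw [← fderiv_fderiv_apply_const (hD x hx)]
      exact hM x hx i₁ i₂) hu hv hs
  have hQ : ∑ i₂, (∑ i₁, M i₁ i₂ * |v i₁ - u i₁|) * |v i₂ - u i₂|
      = ∑ i₁, ∑ i₂, M i₁ i₂ * |(v i₁ - u i₁) * (v i₂ - u i₂)| := by
    simp only [abs_mul, Finset.sum_mul, mul_assoc]
    exact Finset.sum_comm
  have := le_of_fderiv_apply_le_on_segment
    (fun s hs => (hf _ (hS.add_smul_sub_mem hu hv hs)).differentiableAt two_ne_zero)
    (fun s hs => (hF (Ico_subset_Icc_self hs)).trans_eq (by rw [hQ])) ht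
  linarith

end Coordinates

theorem Convex.relaxation_iterate_mem {E : Type*} [AddCommGroup E] [Module ℝ E] {S : Set E}
    (hS : Convex ℝ S) {u v : ℕ → E} {K : ℕ → ℝ} (hu₀ : u 0 ∈ S) (hv : ∀ k, v k ∈ S)
    (hK : ∀ k, K k ∈ Icc (0 : ℝ) 1) (hupd : ∀ k, u (k + 1) = u k + K k • (v k - u k)) :
    ∀ k, u k ∈ S
  | 0 => hu₀
  | k + 1 => hupd k ▸ hS.add_smul_sub_mem (hS.relaxation_iterate_mem hu₀ hv hK hupd k) (hv k) (hK k)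

theorem Finite.lt_ciInf {α J : Type*} [ConditionallyCompleteLinearOrder α] [Finite J]
    [Nonempty J] {f : J → α} {a : α} (hf : ∀ j, a < f j) : a < ⨅ j, f j := by
  obtain ⟨j, hj⟩ := exists_eq_ciInf_of_finite (f := f)
  exact hj ▸ hf j

section Box

variable {ι : Type*} {uL uU u v : ι → ℝ}

theorem lt_of_mem_Icc_of_ne (hu : u ∈ Icc uL uU) (hv : v ∈ Icc uL uU) (huv : u ≠ v) :
    uL < uU := by
  refine lt_of_le_of_ne (hu.1.trans hu.2) fun h => huv ?_
  rw [← h, Set.Icc_self] at hu hv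
  exact hu.trans hv.symm

theorem abs_sub_le_sub_of_mem_Icc (hu : u ∈ Icc uL uU) (hv : v ∈ Icc uL uU) (i : ι) :
    |v i - u i| ≤ uU i - uL i :=
  Real.dist_le_of_mem_Icc ⟨hv.1 i, hv.2 i⟩ ⟨hu.1 i, hu.2 i⟩

variable [Fintype ι]

def linearGrowthBound (κ uL uU : ι → ℝ) : ℝ :=
  ∑ i, κ i * (uU i - uL i)

def quadraticGrowthBound (M : ι → ι → ℝ) (uL uU : ι → ℝ) : ℝ :=
  ∑ i₁, ∑ i₂, M i₁ i₂ * (uU i₁ - uL i₁) * (uU i₂ - uL i₂)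

theorem sum_mul_abs_sub_le_linearGrowthBound {κ : ι → ℝ} (hκ : ∀ i, 0 ≤ κ i)
    (hu : u ∈ Icc uL uU) (hv : v ∈ Icc uL uU) :
    ∑ i, κ i * |v i - u i| ≤ linearGrowthBound κ uL uU :=
  sum_le_sum fun i _ => mul_le_mul_of_nonneg_left (abs_sub_le_sub_of_mem_Icc hu hv i) (hκ i)

theorem sum_sum_mul_abs_le_quadraticGrowthBound {M : ι → ι → ℝ} (hM : ∀ i₁ i₂, 0 ≤ M i₁ i₂)
    (hu : u ∈ Icc uL uU) (hv : v ∈ Icc uL uU) :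
    ∑ i₁, ∑ i₂, M i₁ i₂ * |(v i₁ - u i₁) * (v i₂ - u i₂)| ≤ quadraticGrowthBound M uL uU := by
  refine sum_le_sum fun i₁ _ => sum_le_sum fun i₂ _ => ?_
  have h₁ := abs_sub_le_sub_of_mem_Icc hu hv i₁
  rw [abs_mul, mul_assoc]
  exact mul_le_mul_of_nonneg_left (mul_le_mul h₁ (abs_sub_le_sub_of_mem_Icc hu hv i₂)
    (abs_nonneg _) ((abs_nonneg _).trans h₁)) (hM i₁ i₂)

theorem linearGrowthBound_pos {κ : ι → ℝ} (hκ : ∀ i, 0 < κ i) (h : uL < uU) :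
    0 < linearGrowthBound κ uL uU := by
  obtain ⟨hle, i, hi⟩ := Pi.lt_def.1 h
  exact sum_pos' (fun i _ => mul_nonneg (hκ i).le (sub_nonneg.2 (hle i)))
    ⟨i, mem_univ _, mul_pos (hκ i) (sub_pos.2 hi)⟩

theorem quadraticGrowthBound_pos {M : ι → ι → ℝ} (hM : ∀ i₁ i₂, 0 < M i₁ i₂) (h : uL < uU) :
    0 < quadraticGrowthBound M uL uU := by
  obtain ⟨hle, i, hi⟩ := Pi.lt_def.1 h
  have hw : ∀ i, 0 ≤ uU i - uL i := fun i => sub_nonneg.2 (hle i)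
  have hterm : ∀ i₁ i₂, 0 ≤ M i₁ i₂ * (uU i₁ - uL i₁) * (uU i₂ - uL i₂) := fun i₁ i₂ =>
    mul_nonneg (mul_nonneg (hM i₁ i₂).le (hw i₁)) (hw i₂)
  refine sum_pos' (fun i₁ _ => sum_nonneg fun i₂ _ => hterm i₁ i₂)
    ⟨i, mem_univ _, sum_pos' (fun i₂ _ => hterm i i₂) ⟨i, mem_univ _, ?_⟩⟩
  have := sub_pos.2 hi
  have := hM i i
  positivity

noncomputable def experimentalMargin (γ ε δ g₀ : ℝ) (M : ι → ι → ℝ) (uL uU : ι → ℝ) : ℝ :=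
  min ((1 - γ) * ε) (min (2 * (1 - γ) * δ ^ 2 / quadraticGrowthBound M uL uU) (-g₀))

theorem experimentalMargin_pos {γ ε δ g₀ : ℝ} {M : ι → ι → ℝ} (hγ : γ < 1) (hε : 0 < ε)
    (hδ : 0 < δ) (hg₀ : g₀ < 0) (hQ : 0 < quadraticGrowthBound M uL uU) :
    0 < experimentalMargin γ ε δ g₀ M uL uU := by
  have := sub_pos.2 hγ
  exact lt_min (by positivity) (lt_min (by positivity) (neg_pos.2 hg₀))

theorem add_mul_sum_mul_abs_nonpos {κ : ι → ℝ} {a c K : ℝ} (hκ : ∀ i, 0 ≤ κ i)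
    (hu : u ∈ Icc uL uU) (hv : v ∈ Icc uL uU) (ha : a ≤ -c) (hK₀ : 0 ≤ K)
    (hL : 0 < linearGrowthBound κ uL uU) (hK : K ≤ c / linearGrowthBound κ uL uU) :
    a + K * ∑ i, κ i * |v i - u i| ≤ 0 := by
  rw [le_div_iff₀ hL] at hK
  nlinarith [mul_le_mul_of_nonneg_left (sum_mul_abs_sub_le_linearGrowthBound hκ hu hv) hK₀]

theorem add_half_mul_sum_sum_mul_abs_nonpos {M : ι → ι → ℝ} {a δ K : ℝ}
    (hM : ∀ i₁ i₂, 0 ≤ M i₁ i₂) (hu : u ∈ Icc uL uU) (hv : v ∈ Icc uL uU) (ha : a ≤ -δ)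
    (hK₀ : 0 ≤ K) (hQ : 0 < quadraticGrowthBound M uL uU)
    (hK : K ≤ 2 * δ / quadraticGrowthBound M uL uU) :
    a + K / 2 * ∑ i₁, ∑ i₂, M i₁ i₂ * |(v i₁ - u i₁) * (v i₂ - u i₂)| ≤ 0 := by
  rw [le_div_iff₀ hQ] at hK
  nlinarith [mul_le_mul_of_nonneg_left (sum_sum_mul_abs_le_quadraticGrowthBound hM hu hv) hK₀]

variable [DecidableEq ι] {g : (ι → ℝ) → ℝ} {K γ ε δ : ℝ} {κ : ι → ℝ} {M : ι → ι → ℝ}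

theorem step_le_one_sub_mul_of_filter (hg : ∀ x ∈ Icc uL uU, DifferentiableAt ℝ g x)
    (hγκ : ∀ x ∈ Icc uL uU, ∀ i, |fderiv ℝ g x (Pi.single i 1)| ≤ γ * κ i) (hγ : 0 ≤ γ)
    (hu : u ∈ Icc uL uU) (hv : v ∈ Icc uL uU) (hK : K ∈ Icc (0 : ℝ) 1)
    (hfilter : g u + K * ∑ i, κ i * |v i - u i| ≤ 0) :
    g (u + K • (v - u)) ≤ (1 - γ) * g u := by
  have h := (convex_Icc uL uU).le_add_mul_sum_mul_abs_of_abs_partial_le hg hγκ hu hv hK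
  simp only [mul_assoc, ← mul_sum] at h
  nlinarith [mul_le_mul_of_nonneg_left hfilter hγ]

theorem step_le_of_descent (hg : ∀ x ∈ Icc uL uU, ContDiffAt ℝ 2 g x)
    (hM : ∀ x ∈ Icc uL uU, ∀ i₁ i₂,
      |fderiv ℝ (fun y => fderiv ℝ g y (Pi.single i₁ 1)) x (Pi.single i₂ 1)| ≤ M i₁ i₂)
    (hu : u ∈ Icc uL uU) (hv : v ∈ Icc uL uU) (hK : K ∈ Icc (0 : ℝ) 1)
    (hdescent : fderiv ℝ g u (v - u) ≤ -δ) (hKQ : K * quadraticGrowthBound M uL uU ≤ 2 * δ) :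
    g (u + K • (v - u)) ≤ g u := by
  have hM₀ : ∀ i₁ i₂, 0 ≤ M i₁ i₂ := fun i₁ i₂ => (abs_nonneg _).trans (hM u hu i₁ i₂)
  have hq := sum_sum_mul_abs_le_quadraticGrowthBound hM₀ hu hv
  have htaylor := (convex_Icc uL uU).le_taylor_of_abs_second_partial_le hg hM hu hv hK
  nlinarith [mul_le_mul_of_nonneg_left hdescent hK.1, mul_le_mul_of_nonneg_left hq (sq_nonneg K),
    mul_le_mul_of_nonneg_left hKQ hK.1]

theorem step_nonpos_of_le (hg : ∀ x ∈ Icc uL uU, ContDiffAt ℝ 2 g x)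
    (hκ : ∀ x ∈ Icc uL uU, ∀ i, |fderiv ℝ g x (Pi.single i 1)| ≤ κ i)
    (hM : ∀ x ∈ Icc uL uU, ∀ i₁ i₂,
      |fderiv ℝ (fun y => fderiv ℝ g y (Pi.single i₁ 1)) x (Pi.single i₂ 1)| ≤ M i₁ i₂)
    (hu : u ∈ Icc uL uU) (hv : v ∈ Icc uL uU) (hK : K ∈ Icc (0 : ℝ) 1) (hgu : g u ≤ 0)
    (hproj : -ε ≤ g u → fderiv ℝ g u (v - u) ≤ -δ)
    (hL : 0 < linearGrowthBound κ uL uU) (hQ : 0 < quadraticGrowthBound M uL uU)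
    (hKle : K ≤ min (ε / linearGrowthBound κ uL uU) (2 * δ / quadraticGrowthBound M uL uU)) :
    g (u + K • (v - u)) ≤ 0 := by
  obtain ⟨hKε, hKδ⟩ := le_min_iff.1 hKle
  rcases lt_or_ge (g u) (-ε) with hfar | hnear
  · have h := (convex_Icc uL uU).le_add_mul_sum_mul_abs_of_abs_partial_le
      (fun x hx => (hg x hx).differentiableAt two_ne_zero) hκ hu hv hK
    have hS := sum_mul_abs_sub_le_linearGrowthBound
      (fun i => (abs_nonneg _).trans (hκ u hu i)) hu hv
    rw [le_div_iff₀ hL] at hKε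
    nlinarith [mul_le_mul_of_nonneg_left hS hK.1]
  · exact (step_le_of_descent hg hM hu hv hK (hproj hnear) ((le_div_iff₀ hQ).1 hKδ)).trans hgu

theorem step_le_neg_of_filter {c : ℝ} (hg : ∀ x ∈ Icc uL uU, ContDiffAt ℝ 2 g x)
    (hγκ : ∀ x ∈ Icc uL uU, ∀ i, |fderiv ℝ g x (Pi.single i 1)| ≤ γ * κ i)
    (hγ : γ ∈ Ico (0 : ℝ) 1)
    (hM : ∀ x ∈ Icc uL uU, ∀ i₁ i₂,
      |fderiv ℝ (fun y => fderiv ℝ g y (Pi.single i₁ 1)) x (Pi.single i₂ 1)| ≤ M i₁ i₂)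
    (hδ : 0 < δ) (hu : u ∈ Icc uL uU) (hv : v ∈ Icc uL uU) (hK : K ∈ Icc (0 : ℝ) 1)
    (hfilter : g u + K * ∑ i, κ i * |v i - u i| ≤ 0)
    (hproj : -ε ≤ g u → fderiv ℝ g u (v - u) ≤ -δ)
    (hcε : c ≤ (1 - γ) * ε) (hcδ : c ≤ 2 * (1 - γ) * δ ^ 2 / quadraticGrowthBound M uL uU)
    (hgu : g u ≤ -c) :
    g (u + K • (v - u)) ≤ -c := by
  obtain ⟨hγ₀, hγ₁⟩ := hγ
  have hcontract := step_le_one_sub_mul_of_filter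
    (fun x hx => (hg x hx).differentiableAt two_ne_zero) hγκ hγ₀ hu hv hK hfilter
  rcases lt_or_ge (g u) (-ε) with hfar | hnear
  · nlinarith
  have hdescent := hproj hnear
  rcases le_or_gt (K * quadraticGrowthBound M uL uU) (2 * δ) with hsmall | hlarge
  · exact (step_le_of_descent hg hM hu hv hK hdescent hsmall).trans hgu
  set S := ∑ i, κ i * |v i - u i|
  have hγS : δ ≤ γ * S := by
    have h := (fderiv ℝ g u).abs_apply_le_sum_mul_abs (hγκ u hu) (v - u)
    simp only [Pi.sub_apply, mul_assoc, ← mul_sum] at h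
    linarith [neg_abs_le (fderiv ℝ g u (v - u))]
  have hS : 0 < S := by nlinarith
  have hδS : δ ≤ S := by nlinarith [mul_le_mul_of_nonneg_right hγ₁.le hS.le]
  have hQ : 0 < quadraticGrowthBound M uL uU := pos_of_mul_pos_right (by linarith) hK.1
  rw [le_div_iff₀ hQ] at hcδ
  have hcK : c ≤ (1 - γ) * (K * δ) := by
    have : 0 ≤ (1 - γ) * δ := mul_nonneg (by linarith) hδ.le
    refine le_of_mul_le_mul_right ?_ hQ
    nlinarith [mul_le_mul_of_nonneg_left hlarge.le this]
  nlinarith [mul_le_mul_of_nonneg_left hδS hK.1]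

theorem iterate_le_neg_experimentalMargin {u v : ℕ → ι → ℝ} {K : ℕ → ℝ}
    (hg : ∀ x ∈ Icc uL uU, ContDiffAt ℝ 2 g x)
    (hγκ : ∀ x ∈ Icc uL uU, ∀ i, |fderiv ℝ g x (Pi.single i 1)| ≤ γ * κ i)
    (hγ : γ ∈ Ico (0 : ℝ) 1)
    (hM : ∀ x ∈ Icc uL uU, ∀ i₁ i₂,
      |fderiv ℝ (fun y => fderiv ℝ g y (Pi.single i₁ 1)) x (Pi.single i₂ 1)| ≤ M i₁ i₂)
    (hδ : 0 < δ) (hu : ∀ k, u k ∈ Icc uL uU) (hv : ∀ k, v k ∈ Icc uL uU)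
    (hK : ∀ k, K k ∈ Icc (0 : ℝ) 1) (hupd : ∀ k, u (k + 1) = u k + K k • (v k - u k))
    (hfilter : ∀ k, g (u k) + K k * ∑ i, κ i * |v k i - u k i| ≤ 0)
    (hproj : ∀ k, -ε ≤ g (u k) → fderiv ℝ g (u k) (v k - u k) ≤ -δ) :
    ∀ k, g (u k) ≤ -experimentalMargin γ ε δ (g (u 0)) M uL uU
  | 0 => le_neg_of_le_neg ((min_le_right _ _).trans (min_le_right _ _))
  | k + 1 => hupd k ▸ step_le_neg_of_filter hg hγκ hγ hM hδ (hu k) (hv k) (hK k) (hfilter k)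
      (hproj k) (min_le_left _ _) ((min_le_right _ _).trans (min_le_left _ _))
      (iterate_le_neg_experimentalMargin hg hγκ hγ hM hδ hu hv hK hupd hfilter hproj k)

end Box

section GainBound

variable {ι J P : Type*} [Fintype ι] (uL uU : ι → ℝ) (δφ : ℝ)
  (Mφ : ι → ι → ℝ) (εn δn : J → ℝ) (κn : J → ι → ℝ) (Mn : J → ι → ι → ℝ) (γ εp δp g₀ : P → ℝ)
  (κp : P → ι → ℝ) (Mp : P → ι → ι → ℝ)

noncomputable def gainLowerBound : ℝ :=
  min (2 * δφ / quadraticGrowthBound Mφ uL uU)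
    (min (⨅ j, min (εn j / linearGrowthBound (κn j) uL uU)
        (2 * δn j / quadraticGrowthBound (Mn j) uL uU))
      (⨅ j, experimentalMargin (γ j) (εp j) (δp j) (g₀ j) (Mp j) uL uU
        / linearGrowthBound (κp j) uL uU))

variable {uL uU δφ Mφ εn δn κn Mn γ εp δp g₀ κp Mp}

theorem gainLowerBound_le_cost :
    gainLowerBound uL uU δφ Mφ εn δn κn Mn γ εp δp g₀ κp Mp
      ≤ 2 * δφ / quadraticGrowthBound Mφ uL uU :=
  min_le_left _ _

theorem gainLowerBound_le_numerical [Finite J] (j : J) :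
    gainLowerBound uL uU δφ Mφ εn δn κn Mn γ εp δp g₀ κp Mp
      ≤ min (εn j / linearGrowthBound (κn j) uL uU)
        (2 * δn j / quadraticGrowthBound (Mn j) uL uU) :=
  (min_le_right _ _).trans ((min_le_left _ _).trans (ciInf_le (Finite.bddBelow_range _) j))

theorem gainLowerBound_le_experimental [Finite P] (j : P) :
    gainLowerBound uL uU δφ Mφ εn δn κn Mn γ εp δp g₀ κp Mp
      ≤ experimentalMargin (γ j) (εp j) (δp j) (g₀ j) (Mp j) uL uU
        / linearGrowthBound (κp j) uL uU :=
  (min_le_right _ _).trans ((min_le_right _ _).trans (ciInf_le (Finite.bddBelow_range _) j))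

theorem gainLowerBound_pos [Finite J] [Finite P] [Nonempty J] [Nonempty P] (hbox : uL < uU)
    (hδφ : 0 < δφ) (hMφ : ∀ i₁ i₂, 0 < Mφ i₁ i₂) (hεn : ∀ j, 0 < εn j) (hδn : ∀ j, 0 < δn j)
    (hκn : ∀ j i, 0 < κn j i) (hMn : ∀ j i₁ i₂, 0 < Mn j i₁ i₂) (hγ : ∀ j, γ j < 1)
    (hεp : ∀ j, 0 < εp j) (hδp : ∀ j, 0 < δp j) (hg₀ : ∀ j, g₀ j < 0)
    (hκp : ∀ j i, 0 < κp j i) (hMp : ∀ j i₁ i₂, 0 < Mp j i₁ i₂) :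
    0 < gainLowerBound uL uU δφ Mφ εn δn κn Mn γ εp δp g₀ κp Mp := by
  refine lt_min (div_pos (by linarith) (quadraticGrowthBound_pos hMφ hbox)) (lt_min ?_ ?_)
  · exact Finite.lt_ciInf fun j => lt_min (div_pos (hεn j) (linearGrowthBound_pos (hκn j) hbox))
      (div_pos (by linarith [hδn j]) (quadraticGrowthBound_pos (hMn j) hbox))
  · exact Finite.lt_ciInf fun j => div_pos (experimentalMargin_pos (hγ j) (hεp j) (hδp j) (hg₀ j)
      (quadraticGrowthBound_pos (hMp j) hbox)) (linearGrowthBound_pos (hκp j) hbox)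

end GainBound

theorem filter_gain_lower_bound_general
    {n mp mg : ℕ} [NeZero mp] [NeZero mg] (uL uU : Fin n → ℝ)
    (φ : (Fin n → ℝ) → ℝ)
    (gp : Fin mp → (Fin n → ℝ) → ℝ) (gn : Fin mg → (Fin n → ℝ) → ℝ)
    (U : Set (Fin n → ℝ)) (hUopen : IsOpen U) (hIU : Set.Icc uL uU ⊆ U)
    (hgp : ∀ j, ContDiffOn ℝ 2 (gp j) U)
    (hgn : ∀ j, ContDiffOn ℝ 2 (gn j) U)
    (κp : Fin mp → Fin n → ℝ) (hκppos : ∀ j i, 0 < κp j i)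
    (κn : Fin mg → Fin n → ℝ) (hκnpos : ∀ j i, 0 < κn j i)
    (hκn : ∀ j, ∀ u ∈ Set.Icc uL uU, ∀ i,
      |fderiv ℝ (gn j) u (Pi.single i 1)| < κn j i)
    (Mφ : Fin n → Fin n → ℝ) (hMφpos : ∀ i₁ i₂, 0 < Mφ i₁ i₂)
    (Mp : Fin mp → Fin n → Fin n → ℝ) (hMppos : ∀ j i₁ i₂, 0 < Mp j i₁ i₂)
    (hMp : ∀ j, ∀ u ∈ Set.Icc uL uU, ∀ i₁ i₂,
      |fderiv ℝ (fun x => fderiv ℝ (gp j) x (Pi.single i₁ 1)) u (Pi.single i₂ 1)|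
        < Mp j i₁ i₂)
    (Mn : Fin mg → Fin n → Fin n → ℝ) (hMnpos : ∀ j i₁ i₂, 0 < Mn j i₁ i₂)
    (hMn : ∀ j, ∀ u ∈ Set.Icc uL uU, ∀ i₁ i₂,
      |fderiv ℝ (fun x => fderiv ℝ (gn j) x (Pi.single i₁ 1)) u (Pi.single i₂ 1)|
        < Mn j i₁ i₂)
    (γ : Fin mp → ℝ) (hγ : ∀ j, γ j ∈ Set.Ico (0 : ℝ) 1)
    (hγκ : ∀ j, ∀ u ∈ Set.Icc uL uU, ∀ i,
      |fderiv ℝ (gp j) u (Pi.single i 1)| ≤ γ j * κp j i)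
    (εp δp : Fin mp → ℝ) (εn δn : Fin mg → ℝ) (δφ : ℝ)
    (hεp : ∀ j, 0 < εp j) (hδp : ∀ j, 0 < δp j)
    (hεn : ∀ j, 0 < εn j) (hδn : ∀ j, 0 < δn j) (hδφ : 0 < δφ)
    (u v : ℕ → (Fin n → ℝ)) (K : ℕ → ℝ)
    (hu0I : u 0 ∈ Set.Icc uL uU)
    (hgp0 : ∀ j, gp j (u 0) < 0) (hgn0 : ∀ j, gn j (u 0) ≤ 0)
    (hvI : ∀ k, v k ∈ Set.Icc uL uU)
    (hupd : ∀ k, u (k + 1) = u k + K k • (v k - u k))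
    (hprojp : ∀ k j, gp j (u k) ≥ -εp j →
      fderiv ℝ (gp j) (u k) (v k - u k) ≤ -δp j)
    (hprojn : ∀ k j, gn j (u k) ≥ -εn j →
      fderiv ℝ (gn j) (u k) (v k - u k) ≤ -δn j)
    (hprojφ : ∀ k, fderiv ℝ φ (u k) (v k - u k) ≤ -δφ)
    (hKmax : ∀ k, IsGreatest
      {K' : ℝ | K' ∈ Set.Icc (0 : ℝ) 1 ∧
        (∀ j, gp j (u k) + K' * ∑ i, κp j i * |v k i - u k i| ≤ 0) ∧
        (∀ j, gn j (u k + K' • (v k - u k)) ≤ 0) ∧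
        (fderiv ℝ φ (u k) (v k - u k) +
          (K' / 2) * ∑ i₁, ∑ i₂, Mφ i₁ i₂ * |(v k i₁ - u k i₁) * (v k i₂ - u k i₂)|
            ≤ 0)}
      (K k)) :
    0 < min 1
        (min (2 * δφ / ∑ i₁, ∑ i₂, Mφ i₁ i₂ * (uU i₁ - uL i₁) * (uU i₂ - uL i₂))
          (min
            (⨅ j, min (εn j / ∑ i, κn j i * (uU i - uL i))
              (2 * δn j /
                ∑ i₁, ∑ i₂, Mn j i₁ i₂ * (uU i₁ - uL i₁) * (uU i₂ - uL i₂)))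
            (⨅ j,
              min ((1 - γ j) * εp j)
                (min (2 * (1 - γ j) * (δp j) ^ 2 /
                    ∑ i₁, ∑ i₂, Mp j i₁ i₂ * (uU i₁ - uL i₁) * (uU i₂ - uL i₂))
                  (-gp j (u 0)))
              / ∑ i, κp j i * (uU i - uL i)))) ∧
      ∀ k, min 1
        (min (2 * δφ / ∑ i₁, ∑ i₂, Mφ i₁ i₂ * (uU i₁ - uL i₁) * (uU i₂ - uL i₂))
          (min
            (⨅ j, min (εn j / ∑ i, κn j i * (uU i - uL i))
              (2 * δn j /
                ∑ i₁, ∑ i₂, Mn j i₁ i₂ * (uU i₁ - uL i₁) * (uU i₂ - uL i₂)))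
            (⨅ j,
              min ((1 - γ j) * εp j)
                (min (2 * (1 - γ j) * (δp j) ^ 2 /
                    ∑ i₁, ∑ i₂, Mp j i₁ i₂ * (uU i₁ - uL i₁) * (uU i₂ - uL i₂))
                  (-gp j (u 0)))
              / ∑ i, κp j i * (uU i - uL i)))) ≤ K k := by
  have hbox : uL < uU := lt_of_mem_Icc_of_ne hu0I (hvI 0) fun h => by
    simpa [← h] using (hprojφ 0).trans_lt (neg_neg_of_pos hδφ)
  have hK01 : ∀ k, K k ∈ Set.Icc (0 : ℝ) 1 := fun k => (hKmax k).1.1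
  have huI := (convex_Icc uL uU).relaxation_iterate_mem hu0I hvI hK01 hupd
  have hC2 : ∀ {f : (Fin n → ℝ) → ℝ}, ContDiffOn ℝ 2 f U →
      ∀ x ∈ Set.Icc uL uU, ContDiffAt ℝ 2 f x :=
    fun hf x hx => hf.contDiffAt (hUopen.mem_nhds (hIU hx))
  have hgn_nonpos : ∀ k j, gn j (u k) ≤ 0
    | 0, j => hgn0 j
    | k + 1, j => hupd k ▸ (hKmax k).1.2.2.1 j
  have hgp_margin := fun j => iterate_le_neg_experimentalMargin (hC2 (hgp j)) (hγκ j) (hγ j)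
    (fun x hx i₁ i₂ => (hMp j x hx i₁ i₂).le) (hδp j) huI hvI hK01 hupd
    (fun k => (hKmax k).1.2.1 j) (fun k => hprojp k j)
  have hpos := lt_min one_pos (gainLowerBound_pos hbox hδφ hMφpos hεn hδn hκnpos hMnpos
    (fun j => (hγ j).2) hεp hδp hgp0 hκppos hMppos)
  refine ⟨hpos, fun k => (hKmax k).2 ⟨⟨hpos.le, min_le_left _ _⟩, fun j => ?_, fun j => ?_, ?_⟩⟩
  · exact add_mul_sum_mul_abs_nonpos (fun i => (hκppos j i).le) (huI k) (hvI k) (hgp_margin j k)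
      hpos.le (linearGrowthBound_pos (hκppos j) hbox)
      ((min_le_right _ _).trans (gainLowerBound_le_experimental j))
  · exact step_nonpos_of_le (hC2 (hgn j)) (fun x hx i => (hκn j x hx i).le)
      (fun x hx i₁ i₂ => (hMn j x hx i₁ i₂).le) (huI k) (hvI k) ⟨hpos.le, min_le_left _ _⟩
      (hgn_nonpos k j) (hprojn k j) (linearGrowthBound_pos (hκnpos j) hbox)
      (quadraticGrowthBound_pos (hMnpos j) hbox)
      ((min_le_right _ _).trans (gainLowerBound_le_numerical j))
  · exact add_half_mul_sum_sum_mul_abs_nonpos (fun i₁ i₂ => (hMφpos i₁ i₂).le) (huI k) (hvI k)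
      (hprojφ k) hpos.le (quadraticGrowthBound_pos hMφpos hbox)
      ((min_le_right _ _).trans gainLowerBound_le_cost)

/-- **Corollary 1.** Strictly positive lower bound on the filter gain:
under the project-and-filter scheme — with cost `φ`, experimental constraints `gp j`,
numerical constraints `gn j`, all C² on an open set containing the box `I = Icc uL uU`
with strict univariate Lipschitz constants `κp j i`, `κn j i` and strict
second-derivative constants `Mφ`, `Mp j`, `Mn j`, strictness coefficients
`γ j ∈ [0,1)` with `|∂gp_j/∂u_i| ≤ γ j * κp j i` on `I`, projection parameters
`εp, εn, δp, δn, δφ > 0`, projected targets `v k ∈ I` satisfying the projection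
constraints, and `K k` chosen maximal in `[0,1]` subject to the three filter
conditions — one has `K k ≥ min 1 K̲ > 0` for every `k`, where `K̲` is as in
equation (5.15) of the paper. -/
theorem filter_gain_lower_bound
    {n mp mg : ℕ} [NeZero mp] [NeZero mg] (uL uU : Fin n → ℝ)
    (φ : (Fin n → ℝ) → ℝ)
    (gp : Fin mp → (Fin n → ℝ) → ℝ) (gn : Fin mg → (Fin n → ℝ) → ℝ)
    (U : Set (Fin n → ℝ)) (hUopen : IsOpen U) (hIU : Set.Icc uL uU ⊆ U)
    (hφ : ContDiffOn ℝ 2 φ U)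
    (hgp : ∀ j, ContDiffOn ℝ 2 (gp j) U)
    (hgn : ∀ j, ContDiffOn ℝ 2 (gn j) U)
    (κp : Fin mp → Fin n → ℝ) (hκppos : ∀ j i, 0 < κp j i)
    (hκp : ∀ j, ∀ u ∈ Set.Icc uL uU, ∀ i,
      |fderiv ℝ (gp j) u (Pi.single i 1)| < κp j i)
    (κn : Fin mg → Fin n → ℝ) (hκnpos : ∀ j i, 0 < κn j i)
    (hκn : ∀ j, ∀ u ∈ Set.Icc uL uU, ∀ i,
      |fderiv ℝ (gn j) u (Pi.single i 1)| < κn j i)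
    (Mφ : Fin n → Fin n → ℝ) (hMφpos : ∀ i₁ i₂, 0 < Mφ i₁ i₂)
    (hMφ : ∀ u ∈ Set.Icc uL uU, ∀ i₁ i₂,
      |fderiv ℝ (fun x => fderiv ℝ φ x (Pi.single i₁ 1)) u (Pi.single i₂ 1)| < Mφ i₁ i₂)
    (Mp : Fin mp → Fin n → Fin n → ℝ) (hMppos : ∀ j i₁ i₂, 0 < Mp j i₁ i₂)
    (hMp : ∀ j, ∀ u ∈ Set.Icc uL uU, ∀ i₁ i₂,
      |fderiv ℝ (fun x => fderiv ℝ (gp j) x (Pi.single i₁ 1)) u (Pi.single i₂ 1)|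
        < Mp j i₁ i₂)
    (Mn : Fin mg → Fin n → Fin n → ℝ) (hMnpos : ∀ j i₁ i₂, 0 < Mn j i₁ i₂)
    (hMn : ∀ j, ∀ u ∈ Set.Icc uL uU, ∀ i₁ i₂,
      |fderiv ℝ (fun x => fderiv ℝ (gn j) x (Pi.single i₁ 1)) u (Pi.single i₂ 1)|
        < Mn j i₁ i₂)
    (γ : Fin mp → ℝ) (hγ : ∀ j, γ j ∈ Set.Ico (0 : ℝ) 1)
    (hγκ : ∀ j, ∀ u ∈ Set.Icc uL uU, ∀ i,
      |fderiv ℝ (gp j) u (Pi.single i 1)| ≤ γ j * κp j i)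
    (εp δp : Fin mp → ℝ) (εn δn : Fin mg → ℝ) (δφ : ℝ)
    (hεp : ∀ j, 0 < εp j) (hδp : ∀ j, 0 < δp j)
    (hεn : ∀ j, 0 < εn j) (hδn : ∀ j, 0 < δn j) (hδφ : 0 < δφ)
    (u v : ℕ → (Fin n → ℝ)) (K : ℕ → ℝ)
    (hu0I : u 0 ∈ Set.Icc uL uU)
    (hgp0 : ∀ j, gp j (u 0) < 0) (hgn0 : ∀ j, gn j (u 0) ≤ 0)
    (hvI : ∀ k, v k ∈ Set.Icc uL uU)
    (hupd : ∀ k, u (k + 1) = u k + K k • (v k - u k))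
    (hprojp : ∀ k j, gp j (u k) ≥ -εp j →
      fderiv ℝ (gp j) (u k) (v k - u k) ≤ -δp j)
    (hprojn : ∀ k j, gn j (u k) ≥ -εn j →
      fderiv ℝ (gn j) (u k) (v k - u k) ≤ -δn j)
    (hprojφ : ∀ k, fderiv ℝ φ (u k) (v k - u k) ≤ -δφ)
    (hKmax : ∀ k, IsGreatest
      {K' : ℝ | K' ∈ Set.Icc (0 : ℝ) 1 ∧
        (∀ j, gp j (u k) + K' * ∑ i, κp j i * |v k i - u k i| ≤ 0) ∧
        (∀ j, gn j (u k + K' • (v k - u k)) ≤ 0) ∧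
        (fderiv ℝ φ (u k) (v k - u k) +
          (K' / 2) * ∑ i₁, ∑ i₂, Mφ i₁ i₂ * |(v k i₁ - u k i₁) * (v k i₂ - u k i₂)|
            ≤ 0)}
      (K k)) :
    0 < min 1
        (min (2 * δφ / ∑ i₁, ∑ i₂, Mφ i₁ i₂ * (uU i₁ - uL i₁) * (uU i₂ - uL i₂))
          (min
            (⨅ j, min (εn j / ∑ i, κn j i * (uU i - uL i))
              (2 * δn j /
                ∑ i₁, ∑ i₂, Mn j i₁ i₂ * (uU i₁ - uL i₁) * (uU i₂ - uL i₂)))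
            (⨅ j,
              min ((1 - γ j) * εp j)
                (min (2 * (1 - γ j) * (δp j) ^ 2 /
                    ∑ i₁, ∑ i₂, Mp j i₁ i₂ * (uU i₁ - uL i₁) * (uU i₂ - uL i₂))
                  (-gp j (u 0)))
              / ∑ i, κp j i * (uU i - uL i)))) ∧
      ∀ k, min 1
        (min (2 * δφ / ∑ i₁, ∑ i₂, Mφ i₁ i₂ * (uU i₁ - uL i₁) * (uU i₂ - uL i₂))
          (min
            (⨅ j, min (εn j / ∑ i, κn j i * (uU i - uL i))
              (2 * δn j /
                ∑ i₁, ∑ i₂, Mn j i₁ i₂ * (uU i₁ - uL i₁) * (uU i₂ - uL i₂)))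
            (⨅ j,
              min ((1 - γ j) * εp j)
                (min (2 * (1 - γ j) * (δp j) ^ 2 /
                    ∑ i₁, ∑ i₂, Mp j i₁ i₂ * (uU i₁ - uL i₁) * (uU i₂ - uL i₂))
                  (-gp j (u 0)))
              / ∑ i, κp j i * (uU i - uL i)))) ≤ K k :=
  filter_gain_lower_bound_general uL uU φ gp gn U hUopen hIU hgp hgn κp hκppos κn hκnpos hκn Mφ
    hMφpos Mp hMppos hMp Mn hMnpos hMn γ hγ hγκ εp δp εn δn δφ hεp hδp hεn hδn hδφ u v K hu0I hgp0
    hgn0 hvI hupd hprojp hprojn hprojφ hKmax
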